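/- arXiv:1901.09309 — 3 statements merged into one kernel-verified Lean document; each statement's English description precedes it below -/
import Mathlib

section
/- Let C and σσ' be symmetric positive definite N×N real matrices, γ > 0, and set D = (γ C^{-1/2} σσ' C^{-1/2})^{1/2} (the positive definite square root). Then a(t) = C^{1/2} D tanh(D(t - T)) C^{1/2} solves the matrix Riccati ODE ∂_t a - γ σσ' + a C^{-1} a = 0 on [0, T] with terminal condition a(T) = 0, and a(t) is symmetric and negative definite for t < T. -/
open Matrix

/-- Hyperbolic tangent of a matrix, via the matrix exponential
(for symmetric matrices this agrees with the functional calculus). -/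
noncomputable def mtanh {n : ℕ} (M : Matrix (Fin n) (Fin n) ℝ) : Matrix (Fin n) (Fin n) ℝ :=
  (NormedSpace.exp M - NormedSpace.exp (-M)) * (NormedSpace.exp M + NormedSpace.exp (-M))⁻¹

/-!
Diagonalise `D = U diag(d) Uᵀ` with `U` orthogonal. Then `tanh((t - T) D) = U diag(tanh((t - T) dₖ)) Uᵀ`,
so `a(t) = C^{1/2} U diag(gₖ(t)) Uᵀ C^{1/2}` with `gₖ(t) = dₖ tanh((t - T) dₖ)`, while
`γ S = C^{1/2} D² C^{1/2}` and `a C⁻¹ a = C^{1/2} U diag(gₖ²) Uᵀ C^{1/2}`. The Riccati equation thus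
decouples into the scalar equations `gₖ' = dₖ² - gₖ²`, which hold because `tanh' = 1 - tanh²`.
Moreover `a(T) = 0` since `tanh 0 = 0`, and for `t < T` the matrix `-a(t)` is congruent to the
positive diagonal matrix `diag(-gₖ(t))`.
-/
theorem Real.hasDerivAt_tanh (x : ℝ) : HasDerivAt Real.tanh (1 - Real.tanh x ^ 2) x := by
  have h := (Real.hasDerivAt_sinh x).div (Real.hasDerivAt_cosh x) (Real.cosh_pos x).ne'
  rw [show Real.sinh / Real.cosh = Real.tanh from
    funext fun y => (Real.tanh_eq_sinh_div_cosh y).symm] at h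
  refine h.congr_deriv ?_
  rw [Real.tanh_eq_sinh_div_cosh]
  field_simp [(Real.cosh_pos x).ne']

theorem Real.tanh_pos {x : ℝ} (hx : 0 < x) : 0 < Real.tanh x := by
  rw [Real.tanh_eq_sinh_div_cosh]
  exact div_pos (Real.sinh_pos_iff.mpr hx) (Real.cosh_pos x)

theorem Real.neg_mul_tanh_sub_mul_pos {c T t : ℝ} (hc : 0 < c) (ht : t < T) :
    0 < -(c * Real.tanh ((t - T) * c)) := by
  rw [← mul_neg, ← Real.tanh_neg, ← neg_mul, neg_sub]
  exact mul_pos hc (Real.tanh_pos (mul_pos (sub_pos.mpr ht) hc))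

theorem Real.hasDerivAt_mul_tanh_sub_mul (c T t : ℝ) :
    HasDerivAt (fun τ => c * Real.tanh ((τ - T) * c))
      (c * c - c * Real.tanh ((t - T) * c) * (c * Real.tanh ((t - T) * c))) t := by
  have hlin : HasDerivAt (fun τ => (τ - T) * c) c t := by
    simpa using ((hasDerivAt_id t).sub_const T).mul_const c
  refine (((Real.hasDerivAt_tanh _).comp t hlin).const_mul c).congr_deriv ?_
  ring

namespace Matrix

variable {n : Type*} [Fintype n] [DecidableEq n]

noncomputable def diagConj (U : unitary (Matrix n n ℝ)) : (n → ℝ) →ₐ[ℝ] Matrix n n ℝ :=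
  (Unitary.conjStarAlgAut ℝ _ U).toStarAlgHom.toAlgHom.comp (diagonalAlgHom ℝ)

variable (U : unitary (Matrix n n ℝ))

theorem diagConj_apply (v : n → ℝ) :
    diagConj U v = (U : Matrix n n ℝ) * diagonal v * star (U : Matrix n n ℝ) :=
  rfl

theorem IsHermitian.eq_diagConj {D : Matrix n n ℝ} (hD : D.IsHermitian) :
    D = diagConj hD.eigenvectorUnitary hD.eigenvalues :=
  hD.spectral_theorem

theorem exp_diagConj (v : n → ℝ) :
    NormedSpace.exp (diagConj U v) = diagConj U (fun i => Real.exp (v i)) := by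
  have hinv : (U : Matrix n n ℝ)⁻¹ = star (U : Matrix n n ℝ) :=
    inv_eq_right_inv (Unitary.coe_mul_star_self U)
  rw [diagConj_apply, diagConj_apply, ← hinv,
    exp_conj (U : Matrix n n ℝ) _ ⟨Unitary.toUnits U, rfl⟩, exp_diagonal, Pi.exp_def]
  simp only [Real.exp_eq_exp_ℝ]

theorem inv_diagConj {v : n → ℝ} (hv : ∀ i, v i ≠ 0) : (diagConj U v)⁻¹ = diagConj U v⁻¹ := by
  refine inv_eq_right_inv ?_
  rw [← map_mul, ← map_one (diagConj U)]
  congr 1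
  ext i
  exact mul_inv_cancel₀ (hv i)

theorem isHermitian_diagConj (v : n → ℝ) : (diagConj U v).IsHermitian := by
  rw [diagConj_apply, star_eq_conjTranspose]
  exact isHermitian_mul_mul_conjTranspose _ (isHermitian_diagonal v)

theorem posDef_diagConj {v : n → ℝ} (hv : ∀ i, 0 < v i) : (diagConj U v).PosDef := by
  rw [diagConj_apply, star_eq_conjTranspose]
  exact (posDef_diagonal_iff.mpr hv).mul_mul_conjTranspose_same
    (vecMul_injective_iff_isUnit.mpr (Unitary.toUnits U).isUnit)

theorem mul_diagConj_mul_apply {m l : Type*} (A : Matrix m n ℝ) (B : Matrix n l ℝ) (v : n → ℝ)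
    (i : m) (j : l) :
    (A * diagConj U v * B) i j
      = ∑ k, (A * (U : Matrix n n ℝ)) i k * v k * (star (U : Matrix n n ℝ) * B) k j := by
  rw [diagConj_apply, show A * ((U : Matrix n n ℝ) * diagonal v * star (U : Matrix n n ℝ)) * B
      = A * (U : Matrix n n ℝ) * diagonal v * (star (U : Matrix n n ℝ) * B) by
    simp only [Matrix.mul_assoc], mul_apply]
  simp only [mul_diagonal]

theorem hasDerivAt_mul_diagConj_mul_apply {m l : Type*} (A : Matrix m n ℝ) (B : Matrix n l ℝ)
    {f : ℝ → n → ℝ} {f' : n → ℝ} {t : ℝ} (hf : ∀ k, HasDerivAt (fun τ => f τ k) (f' k) t)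
    (i : m) (j : l) :
    HasDerivAt (fun τ => (A * diagConj U (f τ) * B) i j) ((A * diagConj U f' * B) i j) t := by
  simp only [mul_diagConj_mul_apply]
  exact HasDerivAt.fun_sum fun k _ => ((hf k).const_mul _).mul_const _

variable {α : Type*} [CommRing α] {X : Matrix n n α}

theorem mul_inv_mul_inv_mul_cancel (hX : IsUnit X) (M : Matrix n n α) :
    X * (X⁻¹ * M * X⁻¹) * X = M := by
  have h := (isUnit_iff_isUnit_det X).mp hX
  simp only [Matrix.mul_assoc, mul_nonsing_inv_cancel_left _ _ h, nonsing_inv_mul, h,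
    Matrix.mul_one]

theorem conj_mul_inv_sq_mul_conj (hX : IsUnit X) (M M' : Matrix n n α) :
    X * M * X * (X * X)⁻¹ * (X * M' * X) = X * (M * M') * X := by
  have h := (isUnit_iff_isUnit_det X).mp hX
  simp only [Matrix.mul_inv_rev, Matrix.mul_assoc, nonsing_inv_mul_cancel_left _ _ h,
    mul_nonsing_inv_cancel_left _ _ h]

end Matrix

theorem mtanh_diagConj {N : ℕ} (U : unitary (Matrix (Fin N) (Fin N) ℝ)) (v : Fin N → ℝ) :
    mtanh (diagConj U v) = diagConj U (fun i => Real.tanh (v i)) := by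
  rw [mtanh, ← map_neg, exp_diagConj, exp_diagConj, ← map_sub, ← map_add, inv_diagConj U ?hv,
    ← map_mul]
  · congr 1
    ext i
    simp [Real.tanh_eq, div_eq_mul_inv]
  · exact fun i => (add_pos (Real.exp_pos _) (Real.exp_pos _)).ne'

theorem stmt_6_general (N : ℕ) (T : ℝ) (γ : ℝ)
    (C S : Matrix (Fin N) (Fin N) ℝ)
    (Ch : Matrix (Fin N) (Fin N) ℝ) (hCh : Ch.PosDef) (hChsq : Ch * Ch = C)
    (D : Matrix (Fin N) (Fin N) ℝ) (hD : D.PosDef)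
    (hDsq : D * D = γ • (Ch⁻¹ * S * Ch⁻¹))
    (a : ℝ → Matrix (Fin N) (Fin N) ℝ)
    (ha : ∀ t, a t = Ch * (D * mtanh ((t - T) • D)) * Ch) :
    (∀ t ∈ Set.Icc (0 : ℝ) T, ∀ i j,
        HasDerivAt (fun τ => a τ i j) ((γ • S - a t * C⁻¹ * a t) i j) t) ∧
      a T = 0 ∧ (∀ t, (a t).IsSymm) ∧ ∀ t < T, (-(a t)).PosDef := by
  set U := hD.1.eigenvectorUnitary
  set d := hD.1.eigenvalues
  set g : ℝ → Fin N → ℝ := fun t k => d k * Real.tanh ((t - T) * d k)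
  have hDd : D = diagConj U d := hD.1.eq_diagConj
  have hag : ∀ t, a t = Ch * diagConj U (g t) * Ch := fun t => by
    rw [ha, hDd, ← map_smul, mtanh_diagConj, ← map_mul]; rfl
  have hChH : Chᴴ = Ch := hCh.1.eq
  refine ⟨fun t _ i j => ?_, ?_, fun t => ?_, fun t ht => ?_⟩
  · have hγS : γ • S = Ch * diagConj U (d * d) * Ch := by
      rw [map_mul, ← hDd, hDsq, Matrix.mul_smul, Matrix.smul_mul,
        mul_inv_mul_inv_mul_cancel hCh.isUnit]
    have hrhs : γ • S - a t * C⁻¹ * a t = Ch * diagConj U (d * d - g t * g t) * Ch := by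
      rw [hγS, hag, ← hChsq, conj_mul_inv_sq_mul_conj hCh.isUnit, ← map_mul, map_sub,
        Matrix.mul_sub, Matrix.sub_mul]
    rw [hrhs]
    simp only [hag]
    exact hasDerivAt_mul_diagConj_mul_apply U Ch Ch
      (fun k => Real.hasDerivAt_mul_tanh_sub_mul (d k) T t) i j
  · rw [hag, show g T = 0 by ext k; simp [g], map_zero, Matrix.mul_zero, Matrix.zero_mul]
  · rw [← isHermitian_iff_isSymm, hag]
    simpa only [hChH] using isHermitian_conjTranspose_mul_mul Ch (isHermitian_diagConj U (g t))
  · have hpos : ∀ k, 0 < (-g t) k := fun k =>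
      Real.neg_mul_tanh_sub_mul_pos (hD.eigenvalues_pos k) ht
    rw [hag, ← Matrix.neg_mul, ← Matrix.mul_neg, ← map_neg]
    have := (posDef_diagConj U hpos).conjTranspose_mul_mul_same
      (mulVec_injective_iff_isUnit.mpr hCh.isUnit)
    rwa [hChH] at this

/-- with `C` and `S = σσ'` symmetric positive definite, `γ > 0`,
`Ch = C^{1/2}` the positive definite square root of `C`, and
`D = (γ C^{-1/2} S C^{-1/2})^{1/2}` the positive definite square root, the function
`a(t) = C^{1/2} D tanh(D(t-T)) C^{1/2}` solves `a' - γS + a C⁻¹ a = 0` on `[0,T]` with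
`a(T) = 0`, and `a(t)` is symmetric and negative definite for `t < T`. -/
theorem stmt_6 (N : ℕ) (T : ℝ) (hT : 0 < T) (γ : ℝ) (hγ : 0 < γ)
    (C S : Matrix (Fin N) (Fin N) ℝ) (hC : C.PosDef) (hCsymm : C.IsSymm)
    (hS : S.PosDef) (hSsymm : S.IsSymm)
    (Ch : Matrix (Fin N) (Fin N) ℝ) (hCh : Ch.PosDef) (hChsq : Ch * Ch = C)
    (D : Matrix (Fin N) (Fin N) ℝ) (hD : D.PosDef)
    (hDsq : D * D = γ • (Ch⁻¹ * S * Ch⁻¹))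
    (a : ℝ → Matrix (Fin N) (Fin N) ℝ)
    (ha : ∀ t, a t = Ch * (D * mtanh ((t - T) • D)) * Ch) :
    (∀ t ∈ Set.Icc (0 : ℝ) T, ∀ i j,
        HasDerivAt (fun τ => a τ i j) ((γ • S - a t * C⁻¹ * a t) i j) t) ∧
      a T = 0 ∧ (∀ t, (a t).IsSymm) ∧ ∀ t < T, (-(a t)).PosDef :=
  stmt_6_general N T γ C S Ch hCh hChsq D hD hDsq a ha
end

section
/- Define h(t,x) = (1/(2γ)) (Aμ - pr)'Q(Aμ - pr)(T-t) - (1/γ)(Aμ - pr)'QA [x(T-t) + rp(T-t)²/2] + (1/(2γ)) [x'A'QAx(T-t) + (2x'A'QArp + Tr(σ'A'QAσ))(T-t)²/2 + r²p'A'QAp(T-t)³/3], with Q = (σσ')^{-1}. Then h solves the linear parabolic PDE 0 = ∂_t h + (1/2)Tr(σσ' ∇_{xx} h) + r p'∇_x h + (1/(2γ))(A(μ - x) - pr)'Q(A(μ - x) - pr) on [0,T]×ℝ^N with terminal condition h(T,x) = 0. -/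
/-!
Write `τ = T - t`. For fixed `t` the function `h(t, ·)` is a quadratic polynomial in `x` whose
quadratic part is `(τ / 2γ) x'Mx` with `M = A'QA` symmetric, so its gradient is affine in `x` and
its Hessian is the constant matrix `(τ / γ) M`; for fixed `x` it is a cubic polynomial in `τ`
without constant term, which gives `h(T, ·) = 0`. Expanding
`(A(μ - x) - pr)'Q(A(μ - x) - pr) = (v - Ax)'Q(v - Ax)` with `v = Aμ - pr`, every term of the PDE
is a polynomial in `τ` whose coefficients are the scalars `v'Qv`, `v'QAx`, `v'QAp`, `x'Mx`,
`x'Mp`, `p'Mp` and `Tr(σ'Mσ) = Tr(σσ'M)`, and the coefficients cancel term by term.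
-/

open Matrix Set

section CoordinateDerivatives

variable {ι : Type*} [Fintype ι]

theorem HasDerivAt.dotProduct {f g : ℝ → ι → ℝ} {f' g' : ι → ℝ} {s : ℝ}
    (hf : HasDerivAt f f' s) (hg : HasDerivAt g g' s) :
    HasDerivAt (fun s => f s ⬝ᵥ g s) (f' ⬝ᵥ g s + f s ⬝ᵥ g') s := by
  unfold _root_.dotProduct
  rw [← Finset.sum_add_distrib]
  exact HasDerivAt.fun_sum fun j _ => (hasDerivAt_pi.1 hf j).mul (hasDerivAt_pi.1 hg j)

theorem HasDerivAt.mulVec {κ : Type*} (S : Matrix κ ι ℝ) {g : ℝ → ι → ℝ} {g' : ι → ℝ} {s : ℝ}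
    (hg : HasDerivAt g g' s) : HasDerivAt (fun s => S *ᵥ g s) (S *ᵥ g') s :=
  hasDerivAt_pi.2 fun i => by
    simpa only [Matrix.mulVec, zero_dotProduct, zero_add] using
      (hasDerivAt_const s (S i)).dotProduct hg

variable [DecidableEq ι]

theorem deriv_update_of_eq_quadratic {q : (ι → ℝ) → ℝ} {c : ℝ} {w : ι → ℝ} {S : Matrix ι ι ℝ}
    (hq : ∀ y, q y = c + w ⬝ᵥ y + y ⬝ᵥ S *ᵥ y) (x : ι → ℝ) (i : ι) :
    deriv (fun s => q (Function.update x i s)) (x i) = w i + ((S + Sᵀ) *ᵥ x) i := by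
  have hu := hasDerivAt_update x i (x i)
  have H := (((hasDerivAt_const (x i) w).dotProduct hu).const_add c).fun_add
    (hu.dotProduct (hu.mulVec S))
  rw [show (fun s => q (Function.update x i s)) = _ from funext fun s => hq _, H.deriv]
  simp only [Function.update_eq_self, zero_dotProduct, zero_add, dotProduct_single,
    single_dotProduct, add_mulVec, Pi.add_apply, mulVec_transpose, one_mul]
  rw [dotProduct_mulVec, dotProduct_single]
  ring

theorem deriv_update_of_eq_affine {q : (ι → ℝ) → ℝ} {c : ℝ} {w : ι → ℝ}
    (hq : ∀ y, q y = c + w ⬝ᵥ y) (x : ι → ℝ) (i : ι) :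
    deriv (fun s => q (Function.update x i s)) (x i) = w i := by
  simpa using deriv_update_of_eq_quadratic (S := 0) (by simpa using hq) x i

end CoordinateDerivatives

theorem hasDerivAt_cubic_sub (T a b c t : ℝ) :
    HasDerivAt (fun τ => a * (T - τ) + b * (T - τ) ^ 2 + c * (T - τ) ^ 3)
      (-(a + 2 * b * (T - t) + 3 * c * (T - t) ^ 2)) t := by
  have h : HasDerivAt (fun τ : ℝ => T - τ) (-1) t := (hasDerivAt_id' t).const_sub T
  refine (((h.const_mul a).fun_add ((h.fun_pow 2).const_mul b)).fun_add
    ((h.fun_pow 3).const_mul c)).congr_deriv ?_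
  push_cast
  ring

section QuadraticForms

variable {ι κ : Type*} [Fintype ι]

theorem dotProduct_mulVec_comm_of_transpose_eq {S : Matrix ι ι ℝ} (hS : Sᵀ = S) (u w : ι → ℝ) :
    u ⬝ᵥ S *ᵥ w = w ⬝ᵥ S *ᵥ u := by
  rw [dotProduct_mulVec, ← mulVec_transpose, hS, dotProduct_comm]

theorem transpose_mul_mul_self_of_transpose_eq {B : Matrix ι κ ℝ} {S : Matrix ι ι ℝ}
    (hS : Sᵀ = S) : (Bᵀ * S * B)ᵀ = Bᵀ * S * B := by
  rw [transpose_mul, transpose_mul, transpose_transpose, hS, Matrix.mul_assoc]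

variable [Fintype κ]

theorem sum_sum_mul_smul_eq_trace (B : Matrix ι κ ℝ) (C : Matrix κ ι ℝ) (c : ℝ) :
    ∑ i, ∑ j, B i j * (c * C j i) = c * (B * C).trace := by
  simp only [trace, diag, mul_apply, Finset.mul_sum, mul_left_comm c]

theorem quadForm_sub_mulVec {S : Matrix ι ι ℝ} (hS : Sᵀ = S) (B : Matrix ι κ ℝ) (u : ι → ℝ)
    (x : κ → ℝ) :
    (u - B *ᵥ x) ⬝ᵥ S *ᵥ (u - B *ᵥ x) =
      u ⬝ᵥ S *ᵥ u - 2 * (u ⬝ᵥ (S * B) *ᵥ x) + x ⬝ᵥ (Bᵀ * S * B) *ᵥ x := by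
  simp only [mulVec_sub, sub_dotProduct, dotProduct_sub, ← mulVec_mulVec]
  rw [dotProduct_mulVec_comm_of_transpose_eq hS (B *ᵥ x) u, dotProduct_mulVec x Bᵀ,
    vecMul_transpose]
  ring

end QuadraticForms

noncomputable section PDESolution

variable {ι κ : Type*} [Fintype ι] [Fintype κ]
  (T r γ : ℝ) (A Q M : Matrix ι ι ℝ) (σm : Matrix ι κ ℝ) (v p : ι → ℝ)

def pdeSolution (t : ℝ) (x : ι → ℝ) : ℝ :=
  (1 / (2 * γ)) * (v ⬝ᵥ Q.mulVec v) * (T - t)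
    - (1 / γ) * (v ⬝ᵥ (Q * A).mulVec ((T - t) • x + (r * (T - t) ^ 2 / 2) • p))
    + (1 / (2 * γ)) * ((x ⬝ᵥ M.mulVec x) * (T - t)
        + (2 * (x ⬝ᵥ M.mulVec (r • p)) + (σmᵀ * M * σm).trace) * (T - t) ^ 2 / 2
        + r ^ 2 * (p ⬝ᵥ M.mulVec p) * (T - t) ^ 3 / 3)

def pdeSolutionGrad (t : ℝ) (x : ι → ℝ) : ι → ℝ :=
  ((T - t) / γ) • (M *ᵥ x - v ᵥ* (Q * A)) + (r * (T - t) ^ 2 / (2 * γ)) • (M *ᵥ p)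

theorem pdeSolution_terminal (x : ι → ℝ) : pdeSolution T r γ A Q M σm v p T x = 0 := by
  simp [pdeSolution]

theorem pdeSolution_eq_quadratic (t : ℝ) (x : ι → ℝ) :
    pdeSolution T r γ A Q M σm v p t x =
      ((T - t) / (2 * γ) * (v ⬝ᵥ Q *ᵥ v) - r * (T - t) ^ 2 / (2 * γ) * (v ⬝ᵥ (Q * A) *ᵥ p)
        + (T - t) ^ 2 / (4 * γ) * (σmᵀ * M * σm).trace
        + r ^ 2 * (T - t) ^ 3 / (6 * γ) * (p ⬝ᵥ M *ᵥ p))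
      + (-((T - t) / γ) • v ᵥ* (Q * A) + (r * (T - t) ^ 2 / (2 * γ)) • (M *ᵥ p)) ⬝ᵥ x
      + x ⬝ᵥ (((T - t) / (2 * γ)) • M) *ᵥ x := by
  simp only [pdeSolution, mulVec_add, mulVec_smul, dotProduct_add, dotProduct_smul,
    add_dotProduct, smul_dotProduct, smul_mulVec, smul_eq_mul, ← dotProduct_mulVec,
    dotProduct_comm x (M *ᵥ p)]
  ring

theorem pdeSolution_eq_cubic (t : ℝ) (x : ι → ℝ) :
    pdeSolution T r γ A Q M σm v p t x =
      ((v ⬝ᵥ Q *ᵥ v) / (2 * γ) - (v ⬝ᵥ (Q * A) *ᵥ x) / γ + (x ⬝ᵥ M *ᵥ x) / (2 * γ)) * (T - t)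
      + ((2 * r * (x ⬝ᵥ M *ᵥ p) + (σmᵀ * M * σm).trace) / (4 * γ)
          - r * (v ⬝ᵥ (Q * A) *ᵥ p) / (2 * γ)) * (T - t) ^ 2
      + r ^ 2 * (p ⬝ᵥ M *ᵥ p) / (6 * γ) * (T - t) ^ 3 := by
  simp only [pdeSolution, mulVec_add, mulVec_smul, dotProduct_add, dotProduct_smul, smul_eq_mul]
  ring

variable {T r γ A Q M σm v p}

theorem deriv_pdeSolution_time (t : ℝ) (x : ι → ℝ) :
    deriv (fun τ => pdeSolution T r γ A Q M σm v p τ x) t =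
      -(((v ⬝ᵥ Q *ᵥ v) / (2 * γ) - (v ⬝ᵥ (Q * A) *ᵥ x) / γ + (x ⬝ᵥ M *ᵥ x) / (2 * γ))
        + 2 * ((2 * r * (x ⬝ᵥ M *ᵥ p) + (σmᵀ * M * σm).trace) / (4 * γ)
          - r * (v ⬝ᵥ (Q * A) *ᵥ p) / (2 * γ)) * (T - t)
        + 3 * (r ^ 2 * (p ⬝ᵥ M *ᵥ p) / (6 * γ)) * (T - t) ^ 2) := by
  simp only [pdeSolution_eq_cubic]
  exact (hasDerivAt_cubic_sub _ _ _ _ t).deriv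

theorem pdeSolution_pde (hQ : Qᵀ = Q) (hM : M = Aᵀ * Q * A) {μ : ι → ℝ}
    (hv : v = A *ᵥ μ - r • p) (t : ℝ) (x : ι → ℝ) :
    0 = deriv (fun τ => pdeSolution T r γ A Q M σm v p τ x) t
      + (1 / 2) * ∑ i, ∑ j, (σm * σmᵀ) i j * ((T - t) / γ * M j i)
      + r * ∑ i, p i * pdeSolutionGrad T r γ A Q M v p t x i
      + (1 / (2 * γ)) * ((A *ᵥ (μ - x) - r • p) ⬝ᵥ Q *ᵥ (A *ᵥ (μ - x) - r • p)) := by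
  have hMs : Mᵀ = M := hM ▸ transpose_mul_mul_self_of_transpose_eq hQ
  have hresidual : A *ᵥ (μ - x) - r • p = v - A *ᵥ x := by
    rw [hv, mulVec_sub]
    abel
  have hdrift : ∑ i, p i * pdeSolutionGrad T r γ A Q M v p t x i =
      (T - t) / γ * ((x ⬝ᵥ M *ᵥ p) - v ⬝ᵥ (Q * A) *ᵥ p)
        + r * (T - t) ^ 2 / (2 * γ) * (p ⬝ᵥ M *ᵥ p) := by
    change p ⬝ᵥ _ = _
    rw [pdeSolutionGrad, dotProduct_add, dotProduct_smul, dotProduct_smul, dotProduct_sub,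
      dotProduct_mulVec_comm_of_transpose_eq hMs p, dotProduct_comm p, ← dotProduct_mulVec,
      smul_eq_mul, smul_eq_mul]
  rw [deriv_pdeSolution_time, sum_sum_mul_smul_eq_trace, hdrift, hresidual,
    quadForm_sub_mulVec hQ, ← hM, trace_mul_cycle σmᵀ M σm]
  ring

variable [DecidableEq ι]

theorem deriv_update_pdeSolution (hM : Mᵀ = M) (t : ℝ) (x : ι → ℝ) (i : ι) :
    deriv (fun s => pdeSolution T r γ A Q M σm v p t (Function.update x i s)) (x i) =
      pdeSolutionGrad T r γ A Q M v p t x i := by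
  rw [deriv_update_of_eq_quadratic (pdeSolution_eq_quadratic T r γ A Q M σm v p t) x i,
    transpose_smul, hM, ← add_smul]
  simp only [pdeSolutionGrad, Pi.add_apply, Pi.smul_apply, Pi.sub_apply, smul_mulVec,
    smul_eq_mul]
  ring

theorem deriv_update_pdeSolutionGrad (t : ℝ) (x : ι → ℝ) (i j : ι) :
    deriv (fun s => pdeSolutionGrad T r γ A Q M v p t (Function.update x j s) i) (x j) =
      (T - t) / γ * M i j := by
  have hgrad_affine (y : ι → ℝ) : pdeSolutionGrad T r γ A Q M v p t y i =
      (r * (T - t) ^ 2 / (2 * γ) * (M *ᵥ p) i - (T - t) / γ * (v ᵥ* (Q * A)) i)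
        + ((T - t) / γ) • M i ⬝ᵥ y := by
    simp only [pdeSolutionGrad, Pi.add_apply, Pi.smul_apply, Pi.sub_apply, smul_eq_mul,
      smul_dotProduct, mulVec]
    ring
  rw [deriv_update_of_eq_affine hgrad_affine, Pi.smul_apply, smul_eq_mul]

end PDESolution

theorem stmt_13_general (N m : ℕ) (T r γ : ℝ)
    (A : Matrix (Fin N) (Fin N) ℝ) (σm : Matrix (Fin N) (Fin m) ℝ)
    (μ p : Fin N → ℝ)
    (Q : Matrix (Fin N) (Fin N) ℝ) (hQ : Q = (σm * σmᵀ)⁻¹)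
    (v : Fin N → ℝ) (hv : v = A.mulVec μ - r • p)
    (M : Matrix (Fin N) (Fin N) ℝ) (hM : M = Aᵀ * Q * A)
    (h : ℝ → (Fin N → ℝ) → ℝ)
    (hh : ∀ t x, h t x =
      (1 / (2 * γ)) * (v ⬝ᵥ Q.mulVec v) * (T - t)
        - (1 / γ) * (v ⬝ᵥ (Q * A).mulVec ((T - t) • x + (r * (T - t) ^ 2 / 2) • p))
        + (1 / (2 * γ)) * ((x ⬝ᵥ M.mulVec x) * (T - t)
            + (2 * (x ⬝ᵥ M.mulVec (r • p)) + (σmᵀ * M * σm).trace) * (T - t) ^ 2 / 2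
            + r ^ 2 * (p ⬝ᵥ M.mulVec p) * (T - t) ^ 3 / 3))
    (gradh : ℝ → (Fin N → ℝ) → Fin N → ℝ)
    (hgrad : ∀ t x i, gradh t x i = deriv (fun s => h t (Function.update x i s)) (x i))
    (Hessh : ℝ → (Fin N → ℝ) → Fin N → Fin N → ℝ)
    (hHess : ∀ t x i j, Hessh t x i j = deriv (fun s => gradh t (Function.update x j s) i) (x j)) :
    (∀ x, h T x = 0) ∧
      ∀ t ∈ Icc (0 : ℝ) T, ∀ x : Fin N → ℝ,
        0 = deriv (fun τ => h τ x) t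
          + (1 / 2) * ∑ i, ∑ j, (σm * σmᵀ) i j * Hessh t x j i
          + r * ∑ i, p i * gradh t x i
          + (1 / (2 * γ)) *
              ((A.mulVec (μ - x) - r • p) ⬝ᵥ Q.mulVec (A.mulVec (μ - x) - r • p)) := by
  have hQs : Qᵀ = Q := by rw [hQ, transpose_nonsing_inv, transpose_mul, transpose_transpose]
  have hMs : Mᵀ = M := hM ▸ transpose_mul_mul_self_of_transpose_eq hQs
  obtain rfl : h = pdeSolution T r γ A Q M σm v p := funext fun t => funext (hh t)
  obtain rfl : gradh = pdeSolutionGrad T r γ A Q M v p := by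
    ext t x i
    rw [hgrad, deriv_update_pdeSolution hMs]
  obtain rfl : Hessh = fun t _ i j => (T - t) / γ * M i j := by
    ext t x i j
    rw [hHess, deriv_update_pdeSolutionGrad]
  exact ⟨pdeSolution_terminal T r γ A Q M σm v p, fun t _ x => pdeSolution_pde hQs hM hv t x⟩

/-- the explicit function `h` solves the linear parabolic PDE
`0 = ∂_t h + (1/2)Tr(σσ' ∇_{xx}h) + r p'∇_x h + (1/(2γ))(A(μ-x)-pr)'Q(A(μ-x)-pr)`
on `[0,T] × ℝ^N` with `h(T,·) = 0`, where `Q = (σσ')⁻¹`. The spatial gradient and Hessian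
are expressed through iterated partial derivatives (`deriv` along coordinate updates). -/
theorem stmt_13 (N m : ℕ) (T r γ : ℝ) (hT : 0 < T) (hγ : 0 < γ) (hr : 0 < r)
    (A : Matrix (Fin N) (Fin N) ℝ) (σm : Matrix (Fin N) (Fin m) ℝ)
    (hinv : IsUnit (σm * σmᵀ).det)
    (μ p : Fin N → ℝ)
    (Q : Matrix (Fin N) (Fin N) ℝ) (hQ : Q = (σm * σmᵀ)⁻¹)
    (v : Fin N → ℝ) (hv : v = A.mulVec μ - r • p)
    (M : Matrix (Fin N) (Fin N) ℝ) (hM : M = Aᵀ * Q * A)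
    (h : ℝ → (Fin N → ℝ) → ℝ)
    (hh : ∀ t x, h t x =
      (1 / (2 * γ)) * (v ⬝ᵥ Q.mulVec v) * (T - t)
        - (1 / γ) * (v ⬝ᵥ (Q * A).mulVec ((T - t) • x + (r * (T - t) ^ 2 / 2) • p))
        + (1 / (2 * γ)) * ((x ⬝ᵥ M.mulVec x) * (T - t)
            + (2 * (x ⬝ᵥ M.mulVec (r • p)) + (σmᵀ * M * σm).trace) * (T - t) ^ 2 / 2
            + r ^ 2 * (p ⬝ᵥ M.mulVec p) * (T - t) ^ 3 / 3))
    (gradh : ℝ → (Fin N → ℝ) → Fin N → ℝ)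
    (hgrad : ∀ t x i, gradh t x i = deriv (fun s => h t (Function.update x i s)) (x i))
    (Hessh : ℝ → (Fin N → ℝ) → Fin N → Fin N → ℝ)
    (hHess : ∀ t x i j, Hessh t x i j = deriv (fun s => gradh t (Function.update x j s) i) (x j)) :
    (∀ x, h T x = 0) ∧
      ∀ t ∈ Icc (0 : ℝ) T, ∀ x : Fin N → ℝ,
        0 = deriv (fun τ => h τ x) t
          + (1 / 2) * ∑ i, ∑ j, (σm * σmᵀ) i j * Hessh t x j i
          + r * ∑ i, p i * gradh t x i
          + (1 / (2 * γ)) *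
              ((A.mulVec (μ - x) - r • p) ⬝ᵥ Q.mulVec (A.mulVec (μ - x) - r • p)) :=
  stmt_13_general N m T r γ A σm μ p Q hQ v hv M hM h hh gradh hgrad Hessh hHess
end

section
/- Substituting the ansatz H = -exp(-γ(w e^{r(T-t)} + h(t,x))) into the nonlinear HJB equation 0 = ∂_t H + (A(μ-x))'∇_x H + (1/2)Tr(σσ'∇_{xx}H) + wr ∂_w H - (DH)'(σσ')^{-1}(DH)/(2∂_{ww}H), where DH = (A(μ-x) - pr)∂_w H + σσ'∇_{xw}H, reduces it (after dividing by -γH) to the linear PDE 0 = ∂_t h + (1/2)Tr(σσ'∇_{xx}h) + r p'∇_x h + (1/(2γ))(A(μ-x)-pr)'(σσ')^{-1}(A(μ-x)-pr): all nonlinear terms in h, all terms involving w, and the cross terms (A(μ-x)-pr)'∇_x h cancel. -/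
open Matrix

/-- substituting the ansatz `H = -exp(-γ(w e^{r(T-t)} + h(t,x)))` into the
nonlinear HJB expression
`∂_t H + (A(μ-x))'∇_x H + (1/2)Tr(σσ'∇_{xx}H) + wr ∂_w H - (DH)'(σσ')⁻¹(DH)/(2∂_{ww}H)`,
with `DH = (A(μ-x)-pr)∂_w H + σσ'∇_{xw}H` and the partial derivatives of `H` given by their
chain-rule expressions in terms of `∂_t h = htval`, `∇_x h = g`, `∇_{xx} h = Hess`, the HJB
expression equals `(-γH)` times the linear PDE expression
`∂_t h + (1/2)Tr(σσ'∇_{xx}h) + r p'∇_x h + (1/(2γ))(A(μ-x)-pr)'(σσ')⁻¹(A(μ-x)-pr)`: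
all nonlinear terms in `h`, all terms in `w`, and the cross terms `(A(μ-x)-pr)'∇_x h` cancel. -/
theorem stmt_15 (N : ℕ) (γ r T t w : ℝ) (hγ : 0 < γ)
    (x μ p : Fin N → ℝ)
    (A S Q : Matrix (Fin N) (Fin N) ℝ) (hS : S.PosDef) (hSsymm : S.IsSymm) (hQ : Q = S⁻¹)
    (hval htval : ℝ) (g : Fin N → ℝ) (Hess : Matrix (Fin N) (Fin N) ℝ)
    (HH : ℝ) (hHH : HH = -Real.exp (-(γ * (w * Real.exp (r * (T - t)) + hval))))
    (ptH : ℝ) (hptH : ptH = -γ * HH * (-(r * w * Real.exp (r * (T - t))) + htval))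
    (gxH : Fin N → ℝ) (hgxH : ∀ i, gxH i = -γ * HH * g i)
    (HxxH : Matrix (Fin N) (Fin N) ℝ)
    (hHxxH : ∀ i j, HxxH i j = -γ * HH * (Hess i j - γ * g i * g j))
    (pwH : ℝ) (hpwH : pwH = -γ * Real.exp (r * (T - t)) * HH)
    (pwwH : ℝ) (hpwwH : pwwH = γ ^ 2 * Real.exp (2 * r * (T - t)) * HH)
    (xwH : Fin N → ℝ) (hxwH : ∀ i, xwH i = γ ^ 2 * Real.exp (r * (T - t)) * HH * g i)
    (DH : Fin N → ℝ)
    (hDH : ∀ i, DH i = (A.mulVec (μ - x) - r • p) i * pwH + (S.mulVec xwH) i) :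
    ptH + (A.mulVec (μ - x)) ⬝ᵥ gxH + (1 / 2) * ∑ i, ∑ j, S i j * HxxH j i
        + w * r * pwH - (DH ⬝ᵥ Q.mulVec DH) / (2 * pwwH)
      = (-γ * HH) *
        (htval + (1 / 2) * ∑ i, ∑ j, S i j * Hess j i + r * (p ⬝ᵥ g)
          + (1 / (2 * γ)) *
            ((A.mulVec (μ - x) - r • p) ⬝ᵥ Q.mulVec (A.mulVec (μ - x) - r • p))) := by
  set e := Real.exp (r * (T - t)) with he
  set b : Fin N → ℝ := A.mulVec (μ - x) - r • p with hb
  have hQS : Q * S = 1 := by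
    rw [hQ]; exact Matrix.nonsing_inv_mul S hS.det_pos.ne'.isUnit
  have hQsymm : Qᵀ = Q := by
    rw [hQ, Matrix.transpose_nonsing_inv, hSsymm]
  have hQSv : ∀ v : Fin N → ℝ, Q.mulVec (S.mulVec v) = v := by
    intro v
    rw [Matrix.mulVec_mulVec, hQS, Matrix.one_mulVec]
  have hQdot : ∀ u v : Fin N → ℝ, u ⬝ᵥ Q.mulVec v = v ⬝ᵥ Q.mulVec u := by
    intro u v
    have h2 : u ᵥ* Q = Q *ᵥ u := by
      rw [← hQsymm, Matrix.vecMul_transpose, hQsymm]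
    rw [Matrix.dotProduct_mulVec, h2, dotProduct_comm]
  have hHHne : HH ≠ 0 := by
    rw [hHH]; exact neg_ne_zero.mpr (Real.exp_pos _).ne'
  have hene : e ≠ 0 := Real.exp_ne_zero _
  have hγne : γ ≠ 0 := hγ.ne'
  have hDH' : DH = (-(γ * e * HH)) • (b - γ • S.mulVec g) := by
    funext i
    simp only [hDH, hxwH, hpwH, Pi.smul_apply, Pi.sub_apply, smul_eq_mul]
    have hx : S.mulVec xwH i = γ ^ 2 * e * HH * S.mulVec g i := by
      have hv : xwH = (γ ^ 2 * e * HH) • g := by funext j; simp [hxwH, mul_comm]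
      rw [hv, Matrix.mulVec_smul]; simp [mul_comm]
    rw [hx]; ring
  have hSdotcomm : (S.mulVec g) ⬝ᵥ g = g ⬝ᵥ S.mulVec g := dotProduct_comm _ _
  have hquad : DH ⬝ᵥ Q.mulVec DH
      = (γ * e * HH) ^ 2 * (b ⬝ᵥ Q.mulVec b - 2 * γ * (b ⬝ᵥ g)
          + γ ^ 2 * (g ⬝ᵥ S.mulVec g)) := by
    have e2 : (S.mulVec g) ⬝ᵥ Q.mulVec b = b ⬝ᵥ g := by
      rw [hQdot, hQSv]
    have e3 : (S.mulVec g) ⬝ᵥ Q.mulVec (S.mulVec g) = g ⬝ᵥ S.mulVec g := by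
      rw [hQSv, hSdotcomm]
    rw [hDH']
    simp only [Matrix.mulVec_smul, Matrix.mulVec_sub, smul_dotProduct,
      dotProduct_smul, sub_dotProduct, dotProduct_sub,
      smul_eq_mul, hQSv, e2, e3, hSdotcomm]
    ring
  have hgs : g ⬝ᵥ S.mulVec g = ∑ i, ∑ j, g i * (S i j * g j) := by
    simp [dotProduct, Matrix.mulVec, Finset.mul_sum]
  have htr : ∑ i, ∑ j, S i j * HxxH j i
      = -γ * HH * (∑ i, ∑ j, S i j * Hess j i) + γ ^ 2 * HH * (g ⬝ᵥ S.mulVec g) := by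
    have step : ∑ i, ∑ j, S i j * HxxH j i
        = ∑ i, ∑ j, (-γ * HH * (S i j * Hess j i) + γ ^ 2 * HH * (g i * (S i j * g j))) := by
      refine Finset.sum_congr rfl fun i _ => Finset.sum_congr rfl fun j _ => ?_
      rw [hHxxH]; ring
    rw [step, hgs]
    simp only [Finset.sum_add_distrib, ← Finset.mul_sum]
  have hgrad : (A.mulVec (μ - x)) ⬝ᵥ gxH
      = -γ * HH * (b ⬝ᵥ g) + (-γ * HH) * (r * (p ⬝ᵥ g)) := by
    have hgxH' : gxH = (-γ * HH) • g := by funext i; simp [hgxH]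
    rw [hgxH', dotProduct_smul, hb, sub_dotProduct, smul_dotProduct]
    simp only [smul_eq_mul]
    ring
  rw [hquad, htr, hgrad, hptH, hpwH, hpwwH]
  have hE2 : Real.exp (2 * r * (T - t)) = e ^ 2 := by
    rw [he, ← Real.exp_nat_mul]
    ring_nf
  rw [hE2]
  field_simp
  ring
end
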